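/- For every integer k > 2 and all integers s ≥ 1, u₁ ≥ 0, u₂ ≥ 0, the shape counts satisfy the recursion (u₂ + 1) · i_k(s+1, u₁, u₂+1) = (u₁ + 1) · i_k(s, u₁+1, u₂) + (u₁ + 1) · i_k(s−1, u₁+1, u₂). Moreover i_k(s,u₁,u₂) = 0 whenever u₁ + 2u₂ > s. -/

import Mathlib

open scoped Classical

noncomputable section

/-- A diagram on `n` vertices: a set of arcs `(i,j)` with `1 ≤ i < j ≤ n`
in which each vertex belongs to at most one arc. -/
structure Diagram (n : ℕ) where
  arcs : Finset (ℕ × ℕ)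
  valid : ∀ a ∈ arcs, 1 ≤ a.1 ∧ a.1 < a.2 ∧ a.2 ≤ n
  disj : ∀ a ∈ arcs, ∀ b ∈ arcs, a ≠ b →
    a.1 ≠ b.1 ∧ a.1 ≠ b.2 ∧ a.2 ≠ b.1 ∧ a.2 ≠ b.2

namespace Diagram

variable {n : ℕ}

/-- `D` contains a `k`-crossing: arcs `(i₁,j₁),…,(i_k,j_k)` with
`i₁ < i₂ < ⋯ < i_k < j₁ < j₂ < ⋯ < j_k`. -/
def HasCrossing (D : Diagram n) (k : ℕ) : Prop :=
  ∃ a : Fin k → ℕ × ℕ, (∀ t, a t ∈ D.arcs) ∧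
    (∀ s t : Fin k, s < t → (a s).1 < (a t).1) ∧
    (∀ s t : Fin k, s < t → (a s).2 < (a t).2) ∧
    (∀ s t : Fin k, (a s).1 < (a t).2)

/-- `D` is `k`-noncrossing: it has no `k`-crossing. -/
def Noncrossing (k : ℕ) (D : Diagram n) : Prop := ¬ D.HasCrossing k

/-- `D` is a perfect matching: it has no isolated vertices. -/
def Perfect (D : Diagram n) : Prop :=
  ∀ v : ℕ, 1 ≤ v → v ≤ n → ∃ a ∈ D.arcs, v = a.1 ∨ v = a.2

/-- `(i,j),(i+1,j-1),…,(i+σ-1,j-σ+1)` is a (maximal) stack of size `σ` in `D`. -/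
def IsStack (D : Diagram n) (i j σ : ℕ) : Prop :=
  0 < σ ∧ (∀ t < σ, (i + t, j - t) ∈ D.arcs) ∧
    (i - 1, j + 1) ∉ D.arcs ∧ (i + σ, j - σ) ∉ D.arcs

/-- Every stack of `D` has size at least `τ`. -/
def MinStack (τ : ℕ) (D : Diagram n) : Prop :=
  ∀ i j σ : ℕ, D.IsStack i j σ → τ ≤ σ

/-- Every arc of `D` has length at least `lam`. -/
def MinArcLength (lam : ℕ) (D : Diagram n) : Prop :=
  ∀ a ∈ D.arcs, lam ≤ a.2 - a.1

/-- A modular `k`-noncrossing diagram: `k`-noncrossing, every stack has size at least 2,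
and every arc has length at least 4. -/
def Modular (k : ℕ) (D : Diagram n) : Prop :=
  D.Noncrossing k ∧ MinStack 2 D ∧ MinArcLength 4 D

/-- Two arcs cross (i.e. form a 2-crossing). -/
def Crosses (a b : ℕ × ℕ) : Prop :=
  (a.1 < b.1 ∧ b.1 < a.2 ∧ a.2 < b.2) ∨ (b.1 < a.1 ∧ a.1 < b.2 ∧ b.2 < a.2)

/-- The number of 1-arcs (arcs of length 1) of `D`. -/
def oneArcs (D : Diagram n) : ℕ :=
  (D.arcs.filter fun a => a.2 = a.1 + 1).card

/-- The number of pairs of mutually crossing 2-arcs of `D` (`C₂`-elements). -/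
def twoArcCrossPairs (D : Diagram n) : ℕ :=
  ((D.arcs ×ˢ D.arcs).filter fun p =>
    p.1.2 = p.1.1 + 2 ∧ p.2.2 = p.2.1 + 2 ∧ p.1.1 < p.2.1 ∧ Crosses p.1 p.2).card

/-- The number of `C₃`-elements of `D`: pairs `(α,β)` where `α` is the unique 2-arc
crossing `β` and `β` has length at least 3. -/
def c3count (D : Diagram n) : ℕ :=
  (D.arcs.filter fun b => 3 ≤ b.2 - b.1 ∧
    ∃! a : ℕ × ℕ, a ∈ D.arcs ∧ a.2 = a.1 + 2 ∧ Crosses a b).card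

/-- The number of `C₄`-elements of `D`: triples `(α₁,β,α₂)` where `α₁ ≠ α₂` are
2-arcs crossing `β`. -/
def c4count (D : Diagram n) : ℕ :=
  (D.arcs.filter fun b => ∃ a₁ ∈ D.arcs, ∃ a₂ ∈ D.arcs, a₁ ≠ a₂ ∧
    a₁.2 = a₁.1 + 2 ∧ a₂.2 = a₂.1 + 2 ∧ Crosses a₁ b ∧ Crosses a₂ b).card

/-- A `V_k`-shape: a `k`-noncrossing perfect matching all of whose stacks have
size exactly 1. -/
def IsShape (k : ℕ) (D : Diagram n) : Prop :=
  D.Noncrossing k ∧ D.Perfect ∧ ∀ i j σ : ℕ, D.IsStack i j σ → σ = 1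

/-- The dependency graph of `D`: one vertex per arc, two vertices adjacent iff the
corresponding arcs cross. -/
def depGraph (D : Diagram n) : SimpleGraph {a : ℕ × ℕ // a ∈ D.arcs} :=
  SimpleGraph.fromRel fun a b => Crosses a.1 b.1

/-- A skeleton diagram: every arc crosses some other arc and the dependency
graph is connected. -/
def IsSkeleton (D : Diagram n) : Prop :=
  (∀ a ∈ D.arcs, ∃ b ∈ D.arcs, Crosses a b) ∧ D.depGraph.Connected

/-- `D` is irreducible: no vertex `ℓ` splits the arc set into two nonempty parts
`{(i,j) : j < ℓ}` and `{(i,j) : i ≥ ℓ}` covering all arcs. -/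
def Irreducible (D : Diagram n) : Prop :=
  ¬ ∃ ℓ : ℕ, (∃ a ∈ D.arcs, a.2 < ℓ) ∧ (∃ a ∈ D.arcs, ℓ ≤ a.1) ∧
      ∀ a ∈ D.arcs, a.2 < ℓ ∨ ℓ ≤ a.1

/-- A canonical 3-noncrossing skeleton diagram: a 3-noncrossing skeleton diagram
in which every stack has size at least 3 and every arc has length at least 4. -/
def CanonicalSkeleton (D : Diagram n) : Prop :=
  D.Noncrossing 3 ∧ D.IsSkeleton ∧ MinStack 3 D ∧ MinArcLength 4 D

end Diagram

/-- `Qcount k n` : the number of modular `k`-noncrossing diagrams on `n` vertices. -/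
def Qcount (k n : ℕ) : ℕ := Nat.card {D : Diagram n // D.Modular k}

/-- `fMatch k n = f_k(2n,0)` : the number of `k`-noncrossing perfect matchings
on `2n` vertices. -/
def fMatch (k n : ℕ) : ℕ :=
  Nat.card {D : Diagram (2 * n) // D.Noncrossing k ∧ D.Perfect}

/-- `F_k(z) = Σ_{n ≥ 0} f_k(2n,0) zⁿ`. -/
def Fgf (k : ℕ) : PowerSeries ℚ := PowerSeries.mk fun n => (fMatch k n : ℚ)

/-- `icount2 k s m = i_k(s,m)` : the number of `V_k`-shapes with `s` arcs and
`m` 1-arcs. -/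
def icount2 (k s m : ℕ) : ℕ :=
  Nat.card {D : Diagram (2 * s) // D.IsShape k ∧ D.oneArcs = m}

/-- `icount3 k s u₁ u₂ = i_k(s,u₁,u₂)` : the number of `V_k`-shapes with `s` arcs,
`u₁` 1-arcs and `u₂` pairs of mutually crossing 2-arcs. -/
def icount3 (k s u₁ u₂ : ℕ) : ℕ :=
  Nat.card {D : Diagram (2 * s) // D.IsShape k ∧ D.oneArcs = u₁ ∧
    D.twoArcCrossPairs = u₂}

/-- `icount5 k s u₁ u₂ u₃ u₄ = i_k(s,u₁,u₂,u₃,u₄)` : the number of `V_k`-shapes with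
`s` arcs and `uᵢ` `Cᵢ`-elements for `i = 1,2,3,4`. -/
def icount5 (k s u₁ u₂ u₃ u₄ : ℕ) : ℕ :=
  Nat.card {D : Diagram (2 * s) // D.IsShape k ∧ D.oneArcs = u₁ ∧
    D.twoArcCrossPairs = u₂ ∧ D.c3count = u₃ ∧ D.c4count = u₄}

/-- `S(h)` : the number of 3-noncrossing skeleton perfect matchings with `h` arcs,
with the convention `S(0) = S(1) = 1`. -/
def Scount (h : ℕ) : ℕ :=
  if h ≤ 1 then 1
  else Nat.card {D : Diagram (2 * h) // D.Noncrossing 3 ∧ D.Perfect ∧ D.IsSkeleton}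

/-- `S(y) = Σ_{h ≥ 0} S(h) y^h`. -/
def Sgf : PowerSeries ℚ := PowerSeries.mk fun h => (Scount h : ℚ)

/-- `Irr(h)` : the number of irreducible 3-noncrossing perfect matchings with `h` arcs. -/
def IrrCount (h : ℕ) : ℕ :=
  Nat.card {D : Diagram (2 * h) // D.Noncrossing 3 ∧ D.Perfect ∧ D.Irreducible}

/-- `S3^[4](n)` : the number of canonical 3-noncrossing skeleton diagrams on `n`
vertices. -/
def S34count (n : ℕ) : ℕ := Nat.card {D : Diagram n // D.CanonicalSkeleton}

/-- `A(n,h)` : the number of canonical 3-noncrossing skeleton diagrams on `n`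
vertices having exactly `h` arcs. -/
def Acount (n h : ℕ) : ℕ :=
  Nat.card {D : Diagram n // D.CanonicalSkeleton ∧ D.arcs.card = h}

/-- Substitution `f(g)` of a power series `g` with zero constant term into a
power series `f`, defined coefficientwise by (finite) sums. -/
def substPS (g f : PowerSeries ℚ) : PowerSeries ℚ :=
  PowerSeries.mk fun n => ∑ m ∈ Finset.range (n + 1),
    (PowerSeries.coeff m f) * (PowerSeries.coeff n (g ^ m))

/-- Substitution `f(g)` of a multivariate power series `g` with zero constant term
into a univariate power series `f`, defined coefficientwise by (finite) sums. -/
def substMv {σ : Type*} (g : MvPowerSeries σ ℚ) (f : PowerSeries ℚ) :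
    MvPowerSeries σ ℚ :=
  fun d => ∑ m ∈ Finset.range ((∑ i ∈ d.support, d i) + 1),
    (PowerSeries.coeff m f) * (MvPowerSeries.coeff d (g ^ m))

end

/-!
Double counting of shapes with a marked pair of crossing 2-arcs. In a shape such a pair is
`(x, x+2), (x+1, x+3)`. If the arc `(x-1, x+4)` is present, the three arcs are contracted to the
1-arc `(x-1, x)`, otherwise the two crossing arcs are contracted to the 1-arc `(x, x+1)`; this
removes two resp. one arcs. Conversely a marked 1-arc is replaced by a crossing pair, nested under a
new arc or alone. Both operations preserve `k`-noncrossing (`k ≥ 3`), perfectness and the absence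
of stacks, and change the numbers of 1-arcs and of crossing pairs of 2-arcs by exactly one. Hence
the `(u₂+1) i_k(s+1,u₁,u₂+1)` marked pairs correspond bijectively to the
`(u₁+1) i_k(s,u₁+1,u₂) + (u₁+1) i_k(s-1,u₁+1,u₂)` marked 1-arcs.

The bound holds because the 1-arcs and the arcs of crossing pairs of 2-arcs are pairwise distinct,
so `u₁ + 2 u₂ ≤ s`.
-/

lemma Nat.exists_maximal_prefix {P : ℕ → Prop} (h₀ : P 0) {N : ℕ} (hN : ¬ P N) :
    ∃ r, (∀ r' ≤ r, P r') ∧ ¬ P (r + 1) := by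
  have hex : ∃ m, ¬ P m := ⟨N, hN⟩
  have hpos : Nat.find hex ≠ 0 := fun h => Nat.find_spec hex (h ▸ h₀)
  refine ⟨Nat.find hex - 1, fun r' hr' => ?_, ?_⟩
  · exact not_not.1 (Nat.find_min hex (by omega))
  · rw [Nat.sub_add_cancel (Nat.one_le_iff_ne_zero.2 hpos)]
    exact Nat.find_spec hex

section Marking

variable {α β : Type*} (P : α → Prop) (f : α → Finset β)

def markedEquivSigma : {q : α × β // P q.1 ∧ q.2 ∈ f q.1} ≃ Σ a : {a // P a}, f a where
  toFun q := ⟨⟨q.1.1, q.2.1⟩, q.1.2, q.2.2⟩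
  invFun x := ⟨(x.1.1, x.2.1), x.1.2, x.2.2⟩

variable [Finite α]

lemma finite_marked : Finite {q : α × β // P q.1 ∧ q.2 ∈ f q.1} :=
  Finite.of_equiv _ (markedEquivSigma P f).symm

lemma card_marked_eq_mul {c : ℕ} (h : ∀ a, P a → (f a).card = c) :
    Nat.card {q : α × β // P q.1 ∧ q.2 ∈ f q.1} = c * Nat.card {a // P a} := by
  have := Fintype.ofFinite {a // P a}
  rw [Nat.card_congr (markedEquivSigma P f), Nat.card_sigma]
  simp [h _ (Subtype.prop _), Nat.card_eq_fintype_card, mul_comm]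

end Marking

namespace Diagram

section Basic

variable {n : ℕ}

lemma one_le_fst {D : Diagram n} {a : ℕ × ℕ} (ha : a ∈ D.arcs) : 1 ≤ a.1 := (D.valid a ha).1

lemma fst_lt_snd {D : Diagram n} {a : ℕ × ℕ} (ha : a ∈ D.arcs) : a.1 < a.2 :=
  (D.valid a ha).2.1

lemma snd_le {D : Diagram n} {a : ℕ × ℕ} (ha : a ∈ D.arcs) : a.2 ≤ n := (D.valid a ha).2.2

lemma eq_of_mem_of_vertex_eq {D : Diagram n} {a b : ℕ × ℕ} (ha : a ∈ D.arcs)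
    (hb : b ∈ D.arcs) (h : a.1 = b.1 ∨ a.1 = b.2 ∨ a.2 = b.1 ∨ a.2 = b.2) : a = b := by
  by_contra hne
  have := D.disj a ha b hb hne
  tauto

@[ext]
lemma ext {D E : Diagram n} (h : D.arcs = E.arcs) : D = E := by
  cases D; cases E; simp_all

instance : Finite (Diagram n) :=
  let box := Finset.range (n + 1) ×ˢ Finset.range (n + 1)
  have hbox (D : Diagram n) : D.arcs ⊆ box := fun a ha => by
    have := D.valid a ha
    simp only [box, Finset.mem_product, Finset.mem_range]
    omega
  Finite.of_injective (fun D : Diagram n => (⟨D.arcs, hbox D⟩ : {s // s ⊆ box}))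
    fun _ _ h => ext (congrArg Subtype.val h)

def StackFree (D : Diagram n) : Prop := ∀ a ∈ D.arcs, (a.1 + 1, a.2 - 1) ∉ D.arcs

lemma stackFree_of_stacks_eq_one {D : Diagram n}
    (h : ∀ i j σ : ℕ, D.IsStack i j σ → σ = 1) : D.StackFree := by
  intro a ha hin
  -- extend the pair `a, (a.1+1, a.2-1)` to a maximal stack, outwards by `r` and inwards by `u`
  obtain ⟨r, hr, hr'⟩ := Nat.exists_maximal_prefix (P := fun r => (a.1 - r, a.2 + r) ∈ D.arcs)
    (by simpa using ha) (N := a.1) (fun h => by have := one_le_fst h; simp at this)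
  obtain ⟨u, hu, hu'⟩ :=
    Nat.exists_maximal_prefix (P := fun u => (a.1 + 1 + u, a.2 - 1 - u) ∈ D.arcs)
      (by simpa using hin) (N := a.2) (fun h => by have := fst_lt_snd h; simp at this)
  have hra : r < a.1 := by have := one_le_fst (hr r le_rfl); simp at this; omega
  have hstack : D.IsStack (a.1 - r) (a.2 + r) (r + u + 2) := by
    refine ⟨by omega, fun t ht => ?_, ?_, ?_⟩
    · rcases le_or_gt t r with htr | htr
      · convert hr (r - t) (by omega) using 2 <;> omega
      · convert hu (t - r - 1) (by omega) using 2 <;> omega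
    · convert hr' using 3 <;> omega
    · convert hu' using 3 <;> omega
  have := h _ _ _ hstack
  omega

lemma StackFree.stacks_eq_one {D : Diagram n} (h : D.StackFree) :
    ∀ i j σ : ℕ, D.IsStack i j σ → σ = 1 := by
  rintro i j σ ⟨hpos, hmem, -, -⟩
  by_contra hne
  simpa using h (i, j) (by simpa using hmem 0 hpos) (hmem 1 (by omega))

lemma isShape_iff {k : ℕ} {D : Diagram n} :
    D.IsShape k ↔ D.Noncrossing k ∧ D.Perfect ∧ D.StackFree :=
  and_congr_right' <| and_congr_right' ⟨stackFree_of_stacks_eq_one, StackFree.stacks_eq_one⟩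

noncomputable def oneArcFinset (D : Diagram n) : Finset (ℕ × ℕ) :=
  D.arcs.filter fun a => a.2 = a.1 + 1

noncomputable def twoArcPairsOf (A : Finset (ℕ × ℕ)) : Finset ((ℕ × ℕ) × (ℕ × ℕ)) :=
  (A ×ˢ A).filter fun p =>
    p.1.2 = p.1.1 + 2 ∧ p.2.2 = p.2.1 + 2 ∧ p.1.1 < p.2.1 ∧ Crosses p.1 p.2

lemma oneArcs_eq_card (D : Diagram n) : D.oneArcs = D.oneArcFinset.card := rfl

lemma twoArcCrossPairs_eq_card (D : Diagram n) :
    D.twoArcCrossPairs = (twoArcPairsOf D.arcs).card := rfl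

lemma mem_oneArcFinset {D : Diagram n} {a : ℕ × ℕ} :
    a ∈ D.oneArcFinset ↔ a ∈ D.arcs ∧ a.2 = a.1 + 1 :=
  Finset.mem_filter

lemma mem_twoArcPairsOf {A : Finset (ℕ × ℕ)} {p : (ℕ × ℕ) × (ℕ × ℕ)} :
    p ∈ twoArcPairsOf A ↔ p.1 ∈ A ∧ p.2 ∈ A ∧ p.1.2 = p.1.1 + 2 ∧
      p.2.2 = p.2.1 + 2 ∧ p.1.1 < p.2.1 ∧ Crosses p.1 p.2 := by
  simp [twoArcPairsOf, and_assoc]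

lemma eq_of_mem_twoArcPairsOf {A : Finset (ℕ × ℕ)} {p : (ℕ × ℕ) × (ℕ × ℕ)}
    (hp : p ∈ twoArcPairsOf A) : p = ((p.1.1, p.1.1 + 2), (p.1.1 + 1, p.1.1 + 3)) := by
  obtain ⟨-, -, h₁, h₂, hlt, hc⟩ := mem_twoArcPairsOf.1 hp
  have : p.2.1 = p.1.1 + 1 := by rcases hc with ⟨_, _, _⟩ | ⟨_, _, _⟩ <;> omega
  exact Prod.ext (Prod.ext rfl h₁) (Prod.ext this (by dsimp only; omega))

lemma oneArcs_congr {n₁ n₂ : ℕ} {D₁ : Diagram n₁} {D₂ : Diagram n₂}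
    (h : D₁.arcs = D₂.arcs) : D₁.oneArcs = D₂.oneArcs := by
  simp only [oneArcs, h]

lemma twoArcCrossPairs_congr {n₁ n₂ : ℕ} {D₁ : Diagram n₁} {D₂ : Diagram n₂}
    (h : D₁.arcs = D₂.arcs) : D₁.twoArcCrossPairs = D₂.twoArcCrossPairs := by
  simp only [twoArcCrossPairs, h]

lemma two_mul_card_arcs_le (D : Diagram n) : 2 * D.arcs.card ≤ n := by
  have hdisj : (D.arcs : Set (ℕ × ℕ)).PairwiseDisjoint fun a => ({a.1, a.2} : Finset ℕ) := by
    intro a ha b hb hne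
    have := D.disj a ha b hb hne
    simp only [Function.onFun, Finset.disjoint_insert_left, Finset.disjoint_insert_right,
      Finset.disjoint_singleton, Finset.mem_insert, Finset.mem_singleton]
    omega
  calc 2 * D.arcs.card = (D.arcs.biUnion fun a => ({a.1, a.2} : Finset ℕ)).card := by
        rw [Finset.card_biUnion hdisj, Finset.sum_congr rfl fun a ha =>
          Finset.card_pair (fst_lt_snd ha).ne, Finset.sum_const, smul_eq_mul, mul_comm]
    _ ≤ (Finset.Icc 1 n).card := Finset.card_le_card fun v hv => by
        obtain ⟨a, ha, hv⟩ := Finset.mem_biUnion.1 hv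
        have := D.valid a ha
        simp only [Finset.mem_insert, Finset.mem_singleton] at hv
        simp only [Finset.mem_Icc]
        omega
    _ = n := by simp

lemma oneArcs_add_two_mul_twoArcCrossPairs_le (D : Diagram n) :
    D.oneArcs + 2 * D.twoArcCrossPairs ≤ D.arcs.card := by
  rw [oneArcs_eq_card, twoArcCrossPairs_eq_card]
  set P := twoArcPairsOf D.arcs
  have hmem {p} (hp : p ∈ P) := mem_twoArcPairsOf.1 hp
  have hx {p} (hp : p ∈ P) : ∃ x, p = ((x, x + 2), (x + 1, x + 3)) :=
    ⟨_, eq_of_mem_twoArcPairsOf hp⟩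
  have hL : (P.image Prod.fst).card = P.card := Finset.card_image_of_injOn fun p hp q hq h => by
    obtain ⟨x, rfl⟩ := hx hp
    obtain ⟨y, rfl⟩ := hx hq
    simp only [Prod.mk.injEq] at h
    obtain rfl : x = y := by omega
    rfl
  have hR : (P.image Prod.snd).card = P.card := Finset.card_image_of_injOn fun p hp q hq h => by
    obtain ⟨x, rfl⟩ := hx hp
    obtain ⟨y, rfl⟩ := hx hq
    simp only [Prod.mk.injEq] at h
    obtain rfl : x = y := by omega
    rfl
  have hLR : Disjoint (P.image Prod.fst) (P.image Prod.snd) := by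
    simp only [Finset.disjoint_left, Finset.mem_image]
    rintro _ ⟨p, hp, rfl⟩ ⟨q, hq, hqp⟩
    obtain ⟨x, rfl⟩ := hx hp
    obtain ⟨y, rfl⟩ := hx hq
    simp only [Prod.mk.injEq] at hqp
    -- the arcs `(x+1, x+3)` and `(y, y+2)` would share the vertex `x+1 = y+2`
    have := D.disj _ (hmem hp).2.1 _ (hmem hq).1 (by simp; omega)
    simp only at this
    omega
  have hO : Disjoint D.oneArcFinset (P.image Prod.fst ∪ P.image Prod.snd) := by
    simp only [Finset.disjoint_left, mem_oneArcFinset, Finset.mem_union, Finset.mem_image]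
    rintro a ⟨-, ha⟩ (⟨p, hp, rfl⟩ | ⟨p, hp, rfl⟩) <;> have := hmem hp <;> omega
  have hsub : D.oneArcFinset ∪ (P.image Prod.fst ∪ P.image Prod.snd) ⊆ D.arcs := by
    simp only [Finset.union_subset_iff, Finset.image_subset_iff]
    exact ⟨Finset.filter_subset _ _, fun p hp => (hmem hp).1, fun p hp => (hmem hp).2.1⟩
  have := Finset.card_le_card hsub
  rw [Finset.card_union_of_disjoint hO, Finset.card_union_of_disjoint hLR] at this
  omega

end Basic

section Crossing

variable {k : ℕ}

def IsCrossing (a : Fin k → ℕ × ℕ) : Prop :=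
  (∀ s t : Fin k, s < t → (a s).1 < (a t).1) ∧ (∀ s t : Fin k, s < t → (a s).2 < (a t).2) ∧
    ∀ s t : Fin k, (a s).1 < (a t).2

lemma crosses_comm {a b : ℕ × ℕ} : Crosses a b ↔ Crosses b a := by
  unfold Crosses; tauto

lemma IsCrossing.crosses {a : Fin k → ℕ × ℕ} (h : IsCrossing a) {s t : Fin k} (hst : s ≠ t) :
    Crosses (a s) (a t) := by
  obtain ⟨h₁, h₂, h₃⟩ := h
  rcases hst.lt_or_gt with hst | hst
  · exact Or.inl ⟨h₁ s t hst, h₃ t s, h₂ s t hst⟩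
  · exact Or.inr ⟨h₁ t s hst, h₃ s t, h₂ t s hst⟩

lemma IsCrossing.of_map {a : Fin k → ℕ × ℕ} {ρ : ℕ → ℕ} {S : Set ℕ}
    (hS : ∀ t, (a t).1 ∈ S ∧ (a t).2 ∈ S) (hρ : ∀ x ∈ S, ∀ y ∈ S, ρ x < ρ y → x < y)
    (h : IsCrossing (Prod.map ρ ρ ∘ a)) : IsCrossing a := by
  obtain ⟨h₁, h₂, h₃⟩ := h
  exact ⟨fun s t hst => hρ _ (hS s).1 _ (hS t).1 (h₁ s t hst),
    fun s t hst => hρ _ (hS s).2 _ (hS t).2 (h₂ s t hst),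
    fun s t => hρ _ (hS s).1 _ (hS t).2 (h₃ s t)⟩

end Crossing

/-! Relabelling of the vertices when `t` vertices are inserted at, or removed from, position `i` -/

def shiftUp (i t v : ℕ) : ℕ := if v < i then v else v + t

def shiftDown (i t v : ℕ) : ℕ := if v < i then v else v - t

section Shift

variable {i t : ℕ}

lemma shiftUp_cases (v : ℕ) : v < i ∧ shiftUp i t v = v ∨ i ≤ v ∧ shiftUp i t v = v + t := by
  unfold shiftUp; split_ifs <;> omega

lemma shiftDown_cases (v : ℕ) :
    v < i ∧ shiftDown i t v = v ∨ i ≤ v ∧ shiftDown i t v = v - t := by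
  unfold shiftDown; split_ifs <;> omega

lemma shiftUp_strictMono : StrictMono (shiftUp i t) := fun a b h => by
  unfold shiftUp; split_ifs <;> omega

lemma shiftDown_shiftUp (v : ℕ) : shiftDown i t (shiftUp i t v) = v := by
  unfold shiftUp shiftDown; split_ifs <;> omega

lemma shiftUp_shiftDown {v : ℕ} (hv : v < i ∨ i + t ≤ v) : shiftUp i t (shiftDown i t v) = v := by
  unfold shiftUp shiftDown; split_ifs <;> omega

lemma shiftDown_lt_shiftDown_iff {a b : ℕ} (ha : a < i ∨ i + t ≤ a) (hb : b < i ∨ i + t ≤ b) :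
    shiftDown i t a < shiftDown i t b ↔ a < b := by
  unfold shiftDown; split_ifs <;> omega

lemma prodMap_shiftUp_injective : Function.Injective (Prod.map (shiftUp i t) (shiftUp i t)) :=
  shiftUp_strictMono.injective.prodMap shiftUp_strictMono.injective

lemma crosses_prodMap_shiftUp {a b : ℕ × ℕ} :
    Crosses (Prod.map (shiftUp i t) (shiftUp i t) a) (Prod.map (shiftUp i t) (shiftUp i t) b) ↔
      Crosses a b := by
  simp only [Crosses, Prod.map_fst, Prod.map_snd, shiftUp_strictMono.lt_iff_lt]

end Shift

/-- A gadget on the vertices `i, …, i+t+1` is substituted for a 1-arc `(i, i+1)` after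
inserting `t` new vertices. -/
structure Gadget (i t : ℕ) (N : Finset (ℕ × ℕ)) : Prop where
  two_le : 2 ≤ t
  bounds : ∀ a ∈ N, i ≤ a.1 ∧ a.1 < a.2 ∧ a.2 ≤ i + t + 1
  cover : ∀ v, i ≤ v → v ≤ i + t + 1 → ∃ a ∈ N, v = a.1 ∨ v = a.2
  disj : ∀ a ∈ N, ∀ b ∈ N, a ≠ b → a.1 ≠ b.1 ∧ a.1 ≠ b.2 ∧ a.2 ≠ b.1 ∧ a.2 ≠ b.2
  stackFree : ∀ a ∈ N, (a.1 + 1, a.2 - 1) ∉ N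
  no_threeCrossing : ∀ a ∈ N, ∀ b ∈ N, ∀ c ∈ N, a.1 < b.1 → b.1 < c.1 → c.1 < a.2 →
    a.2 < b.2 → b.2 < c.2 → False
  no_oneArc : ∀ a ∈ N, a.2 ≠ a.1 + 1

def crossingPair (i : ℕ) : Finset (ℕ × ℕ) := {(i, i + 2), (i + 1, i + 3)}

def nestedCrossingPair (i : ℕ) : Finset (ℕ × ℕ) := {(i, i + 5), (i + 1, i + 3), (i + 2, i + 4)}

lemma gadget_crossingPair (i : ℕ) : Gadget i 2 (crossingPair i) := by
  refine ⟨le_rfl, ?_, ?_, ?_, ?_, ?_, ?_⟩ <;> simp [crossingPair] <;> omega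

lemma gadget_nestedCrossingPair (i : ℕ) : Gadget i 4 (nestedCrossingPair i) := by
  refine ⟨by norm_num, ?_, ?_, ?_, ?_, ?_, ?_⟩ <;> simp [nestedCrossingPair]
  omega

lemma twoArcPairsOf_crossingPair (i : ℕ) :
    twoArcPairsOf (crossingPair i) = {((i, i + 2), (i + 1, i + 3))} := by
  ext ⟨⟨a, b⟩, ⟨c, d⟩⟩
  simp [mem_twoArcPairsOf, crossingPair, Crosses]
  omega

lemma twoArcPairsOf_nestedCrossingPair (i : ℕ) :
    twoArcPairsOf (nestedCrossingPair i) = {((i + 1, i + 3), (i + 2, i + 4))} := by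
  ext ⟨⟨a, b⟩, ⟨c, d⟩⟩
  simp [mem_twoArcPairsOf, nestedCrossingPair, Crosses]
  omega

noncomputable def expandArcs (i t : ℕ) (N F : Finset (ℕ × ℕ)) : Finset (ℕ × ℕ) :=
  N ∪ (F.erase (i, i + 1)).image (Prod.map (shiftUp i t) (shiftUp i t))

noncomputable def contractArcs (i t : ℕ) (N D : Finset (ℕ × ℕ)) : Finset (ℕ × ℕ) :=
  insert (i, i + 1) ((D \ N).image (Prod.map (shiftDown i t) (shiftDown i t)))

section Expand

variable {n m i t k : ℕ} {N : Finset (ℕ × ℕ)} {F : Diagram n}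

lemma mem_expandArcs {F : Finset (ℕ × ℕ)} {a : ℕ × ℕ} :
    a ∈ expandArcs i t N F ↔
      a ∈ N ∨ ∃ b, (b ∈ F ∧ b ≠ (i, i + 1)) ∧ Prod.map (shiftUp i t) (shiftUp i t) b = a := by
  simp [expandArcs, and_comm]

lemma mem_contractArcs {D : Finset (ℕ × ℕ)} {a : ℕ × ℕ} :
    a ∈ contractArcs i t N D ↔
      a = (i, i + 1) ∨ ∃ b, (b ∈ D ∧ b ∉ N) ∧ Prod.map (shiftDown i t) (shiftDown i t) b = a := by
  simp [contractArcs]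

lemma endpoints_avoid_of_ne (hγ : (i, i + 1) ∈ F.arcs) {a : ℕ × ℕ} (ha : a ∈ F.arcs)
    (hne : a ≠ (i, i + 1)) : (a.1 < i ∨ i + 2 ≤ a.1) ∧ (a.2 < i ∨ i + 2 ≤ a.2) := by
  by_contra hc
  exact hne (eq_of_mem_of_vertex_eq ha hγ (by omega))

lemma shiftUp_endpoints_avoid (hγ : (i, i + 1) ∈ F.arcs) {a : ℕ × ℕ} (ha : a ∈ F.arcs)
    (hne : a ≠ (i, i + 1)) :
    (shiftUp i t a.1 < i ∨ i + t + 2 ≤ shiftUp i t a.1) ∧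
      (shiftUp i t a.2 < i ∨ i + t + 2 ≤ shiftUp i t a.2) := by
  have := endpoints_avoid_of_ne hγ ha hne
  unfold shiftUp; constructor <;> split_ifs <;> omega

/-- Arcs of length at most 2 cannot straddle the 1-arc `(i, i+1)`, so the shift keeps them. -/
lemma shiftUp_length_eq_iff (hγ : (i, i + 1) ∈ F.arcs) {a : ℕ × ℕ} (ha : a ∈ F.arcs)
    (hne : a ≠ (i, i + 1)) {c : ℕ} (hc : c ≤ 2) :
    shiftUp i t a.2 = shiftUp i t a.1 + c ↔ a.2 = a.1 + c := by
  have := endpoints_avoid_of_ne hγ ha hne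
  have := fst_lt_snd ha
  unfold shiftUp; split_ifs <;> omega

lemma Gadget.not_crosses (hG : Gadget i t N) {a b : ℕ × ℕ} (ha : a ∈ N)
    (hb : (b.1 < i ∨ i + t + 2 ≤ b.1) ∧ (b.2 < i ∨ i + t + 2 ≤ b.2)) : ¬ Crosses a b := by
  have := hG.bounds a ha
  unfold Crosses
  omega

noncomputable def expand (hG : Gadget i t N) (F : Diagram n) (hγ : (i, i + 1) ∈ F.arcs)
    (hm : m = n + t) : Diagram m where
  arcs := expandArcs i t N F.arcs
  valid a ha := by
    rcases mem_expandArcs.1 ha with ha | ⟨b, ⟨hb, -⟩, rfl⟩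
    · have := hG.bounds a ha
      have := one_le_fst hγ
      have := snd_le hγ
      omega
    · have := F.valid b hb
      have := shiftUp_strictMono (i := i) (t := t) (fst_lt_snd hb)
      have := shiftUp_cases (i := i) (t := t) b.1
      have := shiftUp_cases (i := i) (t := t) b.2
      simp only [Prod.map_fst, Prod.map_snd]
      omega
  disj a ha b hb hne := by
    rcases mem_expandArcs.1 ha with haN | ⟨a', ⟨ha', hane⟩, rfl⟩ <;>
      rcases mem_expandArcs.1 hb with hbN | ⟨b', ⟨hb', hbne⟩, rfl⟩
    · exact hG.disj a haN b hbN hne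
    · have := hG.bounds a haN
      have := shiftUp_endpoints_avoid (t := t) hγ hb' hbne
      simp only [Prod.map_fst, Prod.map_snd]
      omega
    · have := hG.bounds b hbN
      have := shiftUp_endpoints_avoid (t := t) hγ ha' hane
      simp only [Prod.map_fst, Prod.map_snd]
      omega
    · have := F.disj a' ha' b' hb' fun h => hne (h ▸ rfl)
      simpa only [Prod.map_fst, Prod.map_snd, shiftUp_strictMono.injective.ne_iff]

variable (hG : Gadget i t N) (hγ : (i, i + 1) ∈ F.arcs) (hm : m = n + t)
include hG hγ

lemma expand_noncrossing (hk : 3 ≤ k) (hnc : F.Noncrossing k) :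
    (expand hG F hγ hm).Noncrossing k := by
  rintro ⟨a, hmem, hcr : IsCrossing a⟩
  by_cases hN : ∃ j, a j ∈ N
  · -- gadget arcs cross no shifted arc, so the whole crossing lies in the gadget
    obtain ⟨j₀, hj₀⟩ := hN
    have hall (j : Fin k) : a j ∈ N := by
      by_contra hj
      obtain ⟨b, ⟨hb, hbne⟩, hba⟩ := (mem_expandArcs.1 (hmem j)).resolve_left hj
      have hcross := hcr.crosses (s := j₀) (t := j) (by rintro rfl; exact hj hj₀)
      rw [← hba] at hcross
      exact hG.not_crosses hj₀ (shiftUp_endpoints_avoid hγ hb hbne) hcross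
    obtain ⟨h₁, h₂, h₃⟩ := hcr
    let j : Fin 3 → Fin k := fun r => ⟨r, by omega⟩
    exact hG.no_threeCrossing _ (hall (j 0)) _ (hall (j 1)) _ (hall (j 2))
      (h₁ _ _ (by simp [j])) (h₁ _ _ (by simp [j])) (h₃ _ _)
      (h₂ _ _ (by simp [j])) (h₂ _ _ (by simp [j]))
  · simp only [not_exists] at hN
    choose b hb hba using fun j => (mem_expandArcs.1 (hmem j)).resolve_left (hN j)
    refine hnc ⟨b, fun j => (hb j).1, IsCrossing.of_map (ρ := shiftUp i t) (S := Set.univ)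
      (by simp) (fun x _ y _ => shiftUp_strictMono.lt_iff_lt.1) ?_⟩
    rwa [show Prod.map (shiftUp i t) (shiftUp i t) ∘ b = a from funext hba]

lemma expand_perfect (hp : F.Perfect) : (expand hG F hγ hm).Perfect := by
  intro v hv₁ hv₂
  by_cases hvw : i ≤ v ∧ v ≤ i + t + 1
  · obtain ⟨a, haN, hva⟩ := hG.cover v hvw.1 hvw.2
    exact ⟨a, mem_expandArcs.2 (Or.inl haN), hva⟩
  · have := snd_le hγ
    have := shiftDown_cases (i := i) (t := t) v
    have hv : shiftUp i t (shiftDown i t v) = v := shiftUp_shiftDown (by omega)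
    obtain ⟨a, ha, hva⟩ := hp (shiftDown i t v) (by omega) (by omega)
    have hane : a ≠ (i, i + 1) := by rintro rfl; simp only at hva; omega
    refine ⟨_, mem_expandArcs.2 (Or.inr ⟨a, ⟨ha, hane⟩, rfl⟩), ?_⟩
    simp only [Prod.map_fst, Prod.map_snd]
    rcases hva with h | h
    · exact Or.inl (h ▸ hv.symm)
    · exact Or.inr (h ▸ hv.symm)

lemma expand_stackFree (hsf : F.StackFree) : (expand hG F hγ hm).StackFree := by
  intro a ha hin
  have := one_le_fst hγ
  rcases mem_expandArcs.1 ha with haN | ⟨b, ⟨hb, hbne⟩, rfl⟩ <;>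
    rcases mem_expandArcs.1 hin with hinN | ⟨c, ⟨hc, hcne⟩, hca⟩
  · exact hG.stackFree a haN hinN
  · have := hG.bounds a haN
    have := shiftUp_endpoints_avoid (t := t) hγ hc hcne
    have : shiftUp i t c.1 = a.1 + 1 := congrArg Prod.fst hca
    omega
  · -- the shifted arc must be `(i-1, i+t+2)`, so `b = (i-1, i+2)` sits directly over `(i, i+1)`
    have := shiftUp_endpoints_avoid (t := t) hγ hb hbne
    have := endpoints_avoid_of_ne hγ hb hbne
    have := hG.bounds _ hinN
    have := shiftUp_cases (i := i) (t := t) b.1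
    have := shiftUp_cases (i := i) (t := t) b.2
    simp only [Prod.map_fst, Prod.map_snd] at *
    refine hsf b hb ?_
    convert hγ using 2 <;> omega
  · have h₁ : shiftUp i t c.1 = shiftUp i t b.1 + 1 := congrArg Prod.fst hca
    have h₂ : shiftUp i t c.2 = shiftUp i t b.2 - 1 := congrArg Prod.snd hca
    have := endpoints_avoid_of_ne hγ hb hbne
    have := endpoints_avoid_of_ne hγ hc hcne
    have := shiftUp_cases (i := i) (t := t) b.1
    have := shiftUp_cases (i := i) (t := t) b.2
    have := shiftUp_cases (i := i) (t := t) c.1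
    have := shiftUp_cases (i := i) (t := t) c.2
    have := fst_lt_snd hb
    have := fst_lt_snd hc
    have := hG.two_le
    refine hsf b hb ?_
    convert hc using 1
    ext <;> simp only <;> omega

lemma expand_oneArcFinset :
    (expand hG F hγ hm).oneArcFinset =
      (F.oneArcFinset.erase (i, i + 1)).image (Prod.map (shiftUp i t) (shiftUp i t)) := by
  ext a
  simp only [mem_oneArcFinset, Finset.mem_image, Finset.mem_erase]
  constructor
  · rintro ⟨ha, hlen⟩
    rcases mem_expandArcs.1 ha with haN | ⟨b, ⟨hb, hbne⟩, rfl⟩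
    · exact absurd hlen (hG.no_oneArc a haN)
    · exact ⟨b, ⟨hbne, hb, (shiftUp_length_eq_iff hγ hb hbne (by norm_num)).1 hlen⟩, rfl⟩
  · rintro ⟨b, ⟨hbne, hb, hlen⟩, rfl⟩
    exact ⟨mem_expandArcs.2 (Or.inr ⟨b, ⟨hb, hbne⟩, rfl⟩),
      (shiftUp_length_eq_iff hγ hb hbne (by norm_num)).2 hlen⟩

lemma oneArcs_expand : (expand hG F hγ hm).oneArcs + 1 = F.oneArcs := by
  have hmem : (i, i + 1) ∈ F.oneArcFinset := mem_oneArcFinset.2 ⟨hγ, rfl⟩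
  rw [oneArcs_eq_card, oneArcs_eq_card, expand_oneArcFinset,
    Finset.card_image_of_injective _ prodMap_shiftUp_injective, Finset.card_erase_add_one hmem]

lemma twoArcPairsOf_expand {P₀ : (ℕ × ℕ) × (ℕ × ℕ)} (hP₀ : twoArcPairsOf N = {P₀}) :
    twoArcPairsOf (expand hG F hγ hm).arcs =
      insert P₀ ((twoArcPairsOf F.arcs).image
        (Prod.map (Prod.map (shiftUp i t) (shiftUp i t)) (Prod.map (shiftUp i t) (shiftUp i t)))) := by
  ext p
  rw [Finset.mem_insert, ← Finset.mem_singleton, ← hP₀, Finset.mem_image]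
  simp only [mem_twoArcPairsOf]
  constructor
  · rintro ⟨h₁, h₂, h₃, h₄, h₅, h₆⟩
    rcases mem_expandArcs.1 h₁ with hN₁ | ⟨b, ⟨hb, hbne⟩, hb₁⟩ <;>
      rcases mem_expandArcs.1 h₂ with hN₂ | ⟨c, ⟨hc, hcne⟩, hc₂⟩
    · exact Or.inl ⟨hN₁, hN₂, h₃, h₄, h₅, h₆⟩
    · rw [← hc₂] at h₆
      exact (hG.not_crosses hN₁ (shiftUp_endpoints_avoid hγ hc hcne) h₆).elim
    · rw [← hb₁] at h₆
      exact (hG.not_crosses hN₂ (shiftUp_endpoints_avoid hγ hb hbne) (crosses_comm.1 h₆)).elim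
    · rw [← hb₁] at h₃ h₅ h₆
      rw [← hc₂] at h₄ h₅ h₆
      simp only [Prod.map_fst, Prod.map_snd, shiftUp_strictMono.lt_iff_lt,
        crosses_prodMap_shiftUp] at h₃ h₄ h₅ h₆
      exact Or.inr ⟨(b, c), ⟨hb, hc, (shiftUp_length_eq_iff hγ hb hbne (by norm_num)).1 h₃,
        (shiftUp_length_eq_iff hγ hc hcne (by norm_num)).1 h₄, h₅, h₆⟩, Prod.ext hb₁ hc₂⟩
  · rintro (⟨h₁, h₂, h₃, h₄, h₅, h₆⟩ | ⟨q, ⟨h₁, h₂, h₃, h₄, h₅, h₆⟩, rfl⟩)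
    · exact ⟨mem_expandArcs.2 (Or.inl h₁), mem_expandArcs.2 (Or.inl h₂), h₃, h₄, h₅, h₆⟩
    · have hne₁ : q.1 ≠ (i, i + 1) := fun h => by simp [h] at h₃
      have hne₂ : q.2 ≠ (i, i + 1) := fun h => by simp [h] at h₄
      refine ⟨mem_expandArcs.2 (Or.inr ⟨q.1, ⟨h₁, hne₁⟩, rfl⟩),
        mem_expandArcs.2 (Or.inr ⟨q.2, ⟨h₂, hne₂⟩, rfl⟩), ?_, ?_, ?_, ?_⟩
      · exact (shiftUp_length_eq_iff hγ h₁ hne₁ (by norm_num)).2 h₃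
      · exact (shiftUp_length_eq_iff hγ h₂ hne₂ (by norm_num)).2 h₄
      · exact shiftUp_strictMono h₅
      · exact crosses_prodMap_shiftUp.2 h₆

lemma twoArcCrossPairs_expand {P₀ : (ℕ × ℕ) × (ℕ × ℕ)} (hP₀ : twoArcPairsOf N = {P₀}) :
    (expand hG F hγ hm).twoArcCrossPairs = F.twoArcCrossPairs + 1 := by
  have hP₀N : P₀.1 ∈ N := (mem_twoArcPairsOf.1 (hP₀ ▸ Finset.mem_singleton_self P₀)).1
  have hnew : P₀ ∉ (twoArcPairsOf F.arcs).image
      (Prod.map (Prod.map (shiftUp i t) (shiftUp i t)) (Prod.map (shiftUp i t) (shiftUp i t))) := by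
    intro hP₀F
    obtain ⟨q, hq, rfl⟩ := Finset.mem_image.1 hP₀F
    obtain ⟨hq₁, -, hq₃, -⟩ := mem_twoArcPairsOf.1 hq
    have := hG.bounds _ hP₀N
    have := shiftUp_endpoints_avoid (t := t) hγ hq₁ fun h => by simp [h] at hq₃
    simp only [Prod.map_fst] at *
    omega
  rw [twoArcCrossPairs_eq_card, twoArcCrossPairs_eq_card, twoArcPairsOf_expand hG hγ hm hP₀,
    Finset.card_insert_of_notMem hnew, Finset.card_image_of_injective _
      (prodMap_shiftUp_injective.prodMap prodMap_shiftUp_injective)]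

lemma contractArcs_expandArcs : contractArcs i t N (expandArcs i t N F.arcs) = F.arcs := by
  ext a
  rw [mem_contractArcs]
  constructor
  · rintro (rfl | ⟨b, ⟨hb, hbN⟩, rfl⟩)
    · exact hγ
    · obtain ⟨c, ⟨hc, -⟩, rfl⟩ := (mem_expandArcs.1 hb).resolve_left hbN
      simpa [Prod.map, shiftDown_shiftUp] using hc
  · intro ha
    refine or_iff_not_imp_left.2 fun hne =>
      ⟨_, ⟨mem_expandArcs.2 (Or.inr ⟨a, ⟨ha, hne⟩, rfl⟩), fun hN => ?_⟩,
        by simp [Prod.map, shiftDown_shiftUp]⟩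
    have := hG.bounds _ hN
    have := shiftUp_endpoints_avoid (t := t) hγ ha hne
    simp only [Prod.map_fst, Prod.map_snd] at *
    omega

end Expand

section Contract

variable {n m i t k : ℕ} {N : Finset (ℕ × ℕ)} {D : Diagram m}

lemma Gadget.one_le_of_subset (hG : Gadget i t N) (hN : N ⊆ D.arcs) : 1 ≤ i := by
  obtain ⟨a, ha, hia⟩ := hG.cover i le_rfl (by omega)
  have := hG.bounds a ha
  have := one_le_fst (hN ha)
  omega

lemma Gadget.add_le_of_subset (hG : Gadget i t N) (hN : N ⊆ D.arcs) : i + t + 1 ≤ m := by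
  obtain ⟨a, ha, hia⟩ := hG.cover (i + t + 1) (by omega) le_rfl
  have := hG.bounds a ha
  have := snd_le (hN ha)
  omega

lemma Gadget.endpoints_avoid_of_notMem (hG : Gadget i t N) (hN : N ⊆ D.arcs) {a : ℕ × ℕ}
    (ha : a ∈ D.arcs) (haN : a ∉ N) :
    (a.1 < i ∨ i + t + 2 ≤ a.1) ∧ (a.2 < i ∨ i + t + 2 ≤ a.2) := by
  have hout (v : ℕ) (hv : v = a.1 ∨ v = a.2) : v < i ∨ i + t + 2 ≤ v := by
    by_contra hw
    obtain ⟨b, hb, hvb⟩ := hG.cover v (by omega) (by omega)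
    exact haN (eq_of_mem_of_vertex_eq ha (hN hb) (by omega) ▸ hb)
  exact ⟨hout _ (Or.inl rfl), hout _ (Or.inr rfl)⟩

noncomputable def contract (hG : Gadget i t N) (D : Diagram m) (hN : N ⊆ D.arcs)
    (hm : m = n + t) : Diagram n where
  arcs := contractArcs i t N D.arcs
  valid a ha := by
    have := hG.one_le_of_subset hN
    have := hG.add_le_of_subset hN
    rcases mem_contractArcs.1 ha with rfl | ⟨b, ⟨hb, hbN⟩, rfl⟩
    · simp only
      omega
    · have := hG.endpoints_avoid_of_notMem hN hb hbN
      have := D.valid b hb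
      have := shiftDown_cases (i := i) (t := t) b.1
      have := shiftDown_cases (i := i) (t := t) b.2
      simp only [Prod.map_fst, Prod.map_snd]
      omega
  disj a ha b hb hne := by
    have := hG.one_le_of_subset hN
    have := hG.two_le
    rcases mem_contractArcs.1 ha with rfl | ⟨a', ⟨ha', haN⟩, rfl⟩ <;>
      rcases mem_contractArcs.1 hb with rfl | ⟨b', ⟨hb', hbN⟩, rfl⟩
    · exact absurd rfl hne
    · have := hG.endpoints_avoid_of_notMem hN hb' hbN
      have := shiftDown_cases (i := i) (t := t) b'.1
      have := shiftDown_cases (i := i) (t := t) b'.2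
      simp only [Prod.map_fst, Prod.map_snd]
      omega
    · have := hG.endpoints_avoid_of_notMem hN ha' haN
      have := shiftDown_cases (i := i) (t := t) a'.1
      have := shiftDown_cases (i := i) (t := t) a'.2
      simp only [Prod.map_fst, Prod.map_snd]
      omega
    · have := D.disj a' ha' b' hb' fun h => hne (h ▸ rfl)
      have := hG.endpoints_avoid_of_notMem hN ha' haN
      have := hG.endpoints_avoid_of_notMem hN hb' hbN
      have := shiftDown_cases (i := i) (t := t) a'.1
      have := shiftDown_cases (i := i) (t := t) a'.2
      have := shiftDown_cases (i := i) (t := t) b'.1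
      have := shiftDown_cases (i := i) (t := t) b'.2
      simp only [Prod.map_fst, Prod.map_snd]
      omega

variable (hG : Gadget i t N) (hN : N ⊆ D.arcs) (hm : m = n + t)
include hG hN

lemma oneArc_mem_contract : (i, i + 1) ∈ (contract hG D hN hm).arcs :=
  Finset.mem_insert_self _ _

lemma contract_noncrossing (hk : 2 ≤ k) (hnc : D.Noncrossing k) :
    (contract hG D hN hm).Noncrossing k := by
  rintro ⟨a, hmem, hcr : IsCrossing a⟩
  have hne (j : Fin k) : a j ≠ (i, i + 1) := fun hj => by
    have := Fin.nontrivial_iff_two_le.2 hk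
    obtain ⟨j', hj'⟩ := exists_ne j
    have := hcr.crosses hj'.symm
    rw [hj] at this
    unfold Crosses at this
    omega
  choose b hb hba using fun j => (mem_contractArcs.1 (hmem j)).resolve_left (hne j)
  refine hnc ⟨b, fun j => (hb j).1, IsCrossing.of_map (ρ := shiftDown i t)
    (S := {v | v < i ∨ i + t + 2 ≤ v}) (fun j => hG.endpoints_avoid_of_notMem hN (hb j).1 (hb j).2)
    (fun x hx y hy => (shiftDown_lt_shiftDown_iff (by grind) (by grind)).1) ?_⟩
  rwa [show Prod.map (shiftDown i t) (shiftDown i t) ∘ b = a from funext hba]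

lemma contract_perfect (hp : D.Perfect) : (contract hG D hN hm).Perfect := by
  have := hG.one_le_of_subset hN
  have := hG.add_le_of_subset hN
  intro v hv₁ hv₂
  by_cases hvγ : v = i ∨ v = i + 1
  · exact ⟨_, oneArc_mem_contract hG hN hm, hvγ⟩
  · -- `v` is the image of the vertex `shiftUp i t v` of `D`, which lies outside the gadget
    have hv := shiftUp_cases (i := i) (t := t) v
    obtain ⟨a, ha, hva⟩ := hp (shiftUp i t v) (by omega) (by omega)
    have haN : a ∉ N := fun haN => by have := hG.bounds a haN; omega
    refine ⟨_, mem_contractArcs.2 (Or.inr ⟨a, ⟨ha, haN⟩, rfl⟩), ?_⟩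
    simp only [Prod.map_fst, Prod.map_snd]
    rcases hva with h | h
    · exact Or.inl (h ▸ (shiftDown_shiftUp v).symm)
    · exact Or.inr (h ▸ (shiftDown_shiftUp v).symm)

/-- The only new stack could be formed by the 1-arc `(i, i+1)` with the arc `(i-1, i+t+2)`;
this is excluded if that arc is absent or if it sits over the gadget arc `(i, i+t+1)`. -/
lemma contract_stackFree (hwrap : (i, i + t + 1) ∈ N ∨ (i - 1, i + t + 2) ∉ D.arcs)
    (hsf : D.StackFree) : (contract hG D hN hm).StackFree := by
  have := hG.one_le_of_subset hN
  have := hG.two_le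
  intro a ha hin
  rcases mem_contractArcs.1 ha with rfl | ⟨b, ⟨hb, hbN⟩, rfl⟩
  · rcases mem_contractArcs.1 hin with h | ⟨c, ⟨hc, hcN⟩, hca⟩
    · simp at h
    · have := hG.endpoints_avoid_of_notMem hN hc hcN
      have := fst_lt_snd hc
      have := shiftDown_cases (i := i) (t := t) c.1
      have := shiftDown_cases (i := i) (t := t) c.2
      have := congrArg Prod.fst hca
      have := congrArg Prod.snd hca
      simp only [Prod.map_fst, Prod.map_snd] at *
      omega
  · have := hG.endpoints_avoid_of_notMem hN hb hbN
    have := shiftDown_cases (i := i) (t := t) b.1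
    have := shiftDown_cases (i := i) (t := t) b.2
    rcases mem_contractArcs.1 hin with h | ⟨c, ⟨hc, hcN⟩, hca⟩
    · have := congrArg Prod.fst h
      have := congrArg Prod.snd h
      simp only [Prod.map_fst, Prod.map_snd] at *
      have hb' : b = (i - 1, i + t + 2) := Prod.ext (by omega) (by omega)
      rcases hwrap with hw | hw
      · refine hsf b hb ?_
        convert hN hw using 2 <;> simp only [hb'] <;> omega
      · exact hw (hb' ▸ hb)
    · have := hG.endpoints_avoid_of_notMem hN hc hcN
      have := shiftDown_cases (i := i) (t := t) c.1
      have := shiftDown_cases (i := i) (t := t) c.2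
      have := fst_lt_snd hb
      have := fst_lt_snd hc
      have := congrArg Prod.fst hca
      have := congrArg Prod.snd hca
      simp only [Prod.map_fst, Prod.map_snd] at *
      exact hsf b hb (by convert hc using 1; ext <;> simp only <;> omega)

lemma expandArcs_contractArcs : expandArcs i t N (contractArcs i t N D.arcs) = D.arcs := by
  have := hG.one_le_of_subset hN
  ext a
  rw [mem_expandArcs]
  constructor
  · rintro (haN | ⟨b, ⟨hb, hbne⟩, rfl⟩)
    · exact hN haN
    · obtain ⟨c, ⟨hc, hcN⟩, rfl⟩ := (mem_contractArcs.1 hb).resolve_left hbne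
      have := hG.endpoints_avoid_of_notMem hN hc hcN
      convert hc using 1
      ext <;> exact shiftUp_shiftDown (by omega)
  · intro ha
    refine or_iff_not_imp_left.2 fun haN => ?_
    have := hG.endpoints_avoid_of_notMem hN ha haN
    refine ⟨_, ⟨mem_contractArcs.2 (Or.inr ⟨a, ⟨ha, haN⟩, rfl⟩), fun h => ?_⟩, ?_⟩
    · have := congrArg Prod.fst h
      have := shiftDown_cases (i := i) (t := t) a.1
      simp only [Prod.map_fst] at *
      omega
    · ext <;> exact shiftUp_shiftDown (by omega)

end Contract

section ShapeWith

variable {n m i t k u₁ u₂ : ℕ} {N : Finset (ℕ × ℕ)}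

def ShapeWith (k u₁ u₂ : ℕ) (D : Diagram n) : Prop :=
  D.IsShape k ∧ D.oneArcs = u₁ ∧ D.twoArcCrossPairs = u₂

lemma oneArc_mem_arcs {F : Diagram n} {γ : ℕ × ℕ} (hγ : γ ∈ F.oneArcFinset) :
    (γ.1, γ.1 + 1) ∈ F.arcs := by
  obtain ⟨h, hlen⟩ := mem_oneArcFinset.1 hγ
  rwa [← hlen]

lemma shapeWith_expand (hG : Gadget i t N) {F : Diagram n} (hγ : (i, i + 1) ∈ F.arcs)
    (hm : m = n + t) {P₀ : (ℕ × ℕ) × (ℕ × ℕ)} (hP₀ : twoArcPairsOf N = {P₀}) (hk : 3 ≤ k)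
    (hF : F.ShapeWith k (u₁ + 1) u₂) : (expand hG F hγ hm).ShapeWith k u₁ (u₂ + 1) := by
  obtain ⟨hsh, h₁, h₂⟩ := hF
  obtain ⟨hnc, hp, hsf⟩ := isShape_iff.1 hsh
  have := oneArcs_expand hG hγ hm
  have := twoArcCrossPairs_expand hG hγ hm hP₀
  exact ⟨isShape_iff.2 ⟨expand_noncrossing hG hγ hm hk hnc, expand_perfect hG hγ hm hp,
    expand_stackFree hG hγ hm hsf⟩, by omega, by omega⟩

lemma shapeWith_contract (hG : Gadget i t N) {D : Diagram m} (hN : N ⊆ D.arcs)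
    (hm : m = n + t) {P₀ : (ℕ × ℕ) × (ℕ × ℕ)} (hP₀ : twoArcPairsOf N = {P₀})
    (hwrap : (i, i + t + 1) ∈ N ∨ (i - 1, i + t + 2) ∉ D.arcs) (hk : 2 ≤ k)
    (hD : D.ShapeWith k u₁ (u₂ + 1)) : (contract hG D hN hm).ShapeWith k (u₁ + 1) u₂ := by
  obtain ⟨hsh, h₁, h₂⟩ := hD
  obtain ⟨hnc, hp, hsf⟩ := isShape_iff.1 hsh
  have hγ := oneArc_mem_contract hG hN hm
  have hE : (expand hG _ hγ hm).arcs = D.arcs := expandArcs_contractArcs hG hN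
  have := oneArcs_expand hG hγ hm
  have := twoArcCrossPairs_expand hG hγ hm hP₀
  rw [oneArcs_congr hE] at *
  rw [twoArcCrossPairs_congr hE] at *
  exact ⟨isShape_iff.2 ⟨contract_noncrossing hG hN hm hk hnc, contract_perfect hG hN hm hp,
    contract_stackFree hG hN hm hwrap hsf⟩, by omega, by omega⟩

lemma expand_injective (hG : Gadget i t N) {F F' : Diagram n} (hγ : (i, i + 1) ∈ F.arcs)
    (hγ' : (i, i + 1) ∈ F'.arcs) (hm : m = n + t)
    (h : expand hG F hγ hm = expand hG F' hγ' hm) : F = F' :=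
  ext <| by
    rw [← contractArcs_expandArcs hG hγ, ← contractArcs_expandArcs hG hγ']
    exact congrArg (contractArcs i t N ∘ arcs) h

lemma wrap_notMem_expand_crossingPair {F : Diagram n} (hγ : (i, i + 1) ∈ F.arcs)
    (hm : m = n + 2) (hsf : F.StackFree) :
    (i - 1, i + 4) ∉ (expand (gadget_crossingPair i) F hγ hm).arcs := by
  intro h
  rcases mem_expandArcs.1 h with h | ⟨b, ⟨hb, hbne⟩, hbw⟩
  · simp [crossingPair] at h
  · have := endpoints_avoid_of_ne hγ hb hbne
    have := congrArg Prod.fst hbw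
    have := congrArg Prod.snd hbw
    have := shiftUp_cases (i := i) (t := 2) b.1
    have := shiftUp_cases (i := i) (t := 2) b.2
    simp only [Prod.map_fst, Prod.map_snd] at *
    refine hsf b hb ?_
    convert hγ using 2 <;> omega

end ShapeWith

end Diagram

open Diagram

abbrev PairMarkedShape (k m u₁ u₂ : ℕ) :=
  {q : Diagram m × ((ℕ × ℕ) × (ℕ × ℕ)) //
    q.1.ShapeWith k u₁ (u₂ + 1) ∧ q.2 ∈ twoArcPairsOf q.1.arcs}

abbrev OneArcMarkedShape (k n u₁ u₂ : ℕ) :=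
  {q : Diagram n × (ℕ × ℕ) // q.1.ShapeWith k (u₁ + 1) u₂ ∧ q.2 ∈ q.1.oneArcFinset}

section ExpandMarked

variable {k n m t u₁ u₂ : ℕ} {G : ℕ → Finset (ℕ × ℕ)} {P : ℕ → (ℕ × ℕ) × (ℕ × ℕ)}
  (hG : ∀ i, Gadget i t (G i)) (hP : ∀ i, twoArcPairsOf (G i) = {P i}) (hm : m = n + t)
  (hk : 3 ≤ k)

noncomputable def expandMarked (q : OneArcMarkedShape k n u₁ u₂) : PairMarkedShape k m u₁ u₂ :=
  ⟨(expand (hG q.1.2.1) q.1.1 (oneArc_mem_arcs q.2.2) hm, P q.1.2.1),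
    shapeWith_expand (hG _) (oneArc_mem_arcs q.2.2) hm (hP _) hk q.2.1, by
      rw [twoArcPairsOf_expand (hG _) (oneArc_mem_arcs q.2.2) hm (hP _)]
      exact Finset.mem_insert_self _ _⟩

lemma expandMarked_injective (hPinj : Function.Injective P) :
    Function.Injective (expandMarked (u₁ := u₁) (u₂ := u₂) hG hP hm hk) := by
  rintro ⟨⟨F, x, y⟩, hF, hγ⟩ ⟨⟨F', x', y'⟩, hF', hγ'⟩ h
  simp only [expandMarked, Subtype.mk.injEq, Prod.mk.injEq] at h
  obtain ⟨hE, hPx⟩ := h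
  obtain rfl := hPinj hPx
  obtain rfl : y = x + 1 := (mem_oneArcFinset.1 hγ).2
  obtain rfl : y' = x + 1 := (mem_oneArcFinset.1 hγ').2
  obtain rfl := expand_injective (hG x) _ _ hm hE
  rfl

lemma exists_expandMarked_eq {D : Diagram m} {x : ℕ} (hN : G x ⊆ D.arcs)
    (hwrap : (x, x + t + 1) ∈ G x ∨ (x - 1, x + t + 2) ∉ D.arcs)
    (hD : D.ShapeWith k u₁ (u₂ + 1)) :
    ∃ q : OneArcMarkedShape k n u₁ u₂, (expandMarked hG hP hm hk q).1 = (D, P x) :=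
  ⟨⟨(contract (hG x) D hN hm, (x, x + 1)),
      shapeWith_contract (hG x) hN hm (hP x) hwrap (by omega) hD,
      mem_oneArcFinset.2 ⟨oneArc_mem_contract (hG x) hN hm, rfl⟩⟩,
    Prod.ext (ext (expandArcs_contractArcs (hG x) hN)) rfl⟩

end ExpandMarked

section Bijection

variable {k s u₁ u₂ : ℕ} (hk : 3 ≤ k) (hs : 1 ≤ s)

noncomputable def expandEitherMarked :
    OneArcMarkedShape k (2 * s) u₁ u₂ ⊕ OneArcMarkedShape k (2 * (s - 1)) u₁ u₂ →
      PairMarkedShape k (2 * (s + 1)) u₁ u₂ :=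
  Sum.elim (expandMarked gadget_crossingPair twoArcPairsOf_crossingPair (by omega) hk)
    (expandMarked gadget_nestedCrossingPair twoArcPairsOf_nestedCrossingPair (by omega) hk)

/-- The two expansions are told apart by the arc `(x-1, x+4)` over the marked pair
`(x, x+2), (x+1, x+3)`, which only the nested gadget provides. -/
lemma expandMarked_crossingPair_ne_nestedCrossingPair {n n' m : ℕ} (hm : m = n + 2)
    (hm' : m = n' + 4) (q : OneArcMarkedShape k n u₁ u₂) (q' : OneArcMarkedShape k n' u₁ u₂) :
    expandMarked gadget_crossingPair twoArcPairsOf_crossingPair hm hk q ≠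
      expandMarked gadget_nestedCrossingPair twoArcPairsOf_nestedCrossingPair hm' hk q' := by
  rintro h
  obtain ⟨⟨F, x, y⟩, hF, hγ⟩ := q
  obtain ⟨⟨F', x', y'⟩, hF', hγ'⟩ := q'
  simp only [expandMarked, Subtype.mk.injEq, Prod.mk.injEq] at h
  obtain ⟨hE, ⟨hx, -⟩, -⟩ := h
  have hwrap := (congrArg (fun D => (x', x' + 5) ∈ D.arcs) hE).mpr
    (Finset.mem_union_left _ (by simp [nestedCrossingPair]))
  refine wrap_notMem_expand_crossingPair (oneArc_mem_arcs hγ) hm (isShape_iff.1 hF.1).2.2 ?_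
  convert hwrap using 2 <;> simp at hx ⊢ <;> omega

lemma expandEitherMarked_surjective :
    Function.Surjective (expandEitherMarked (u₁ := u₁) (u₂ := u₂) hk hs) := by
  rintro ⟨⟨D, p⟩, hD, hp⟩
  obtain ⟨hp₁, hp₂, -⟩ := mem_twoArcPairsOf.1 hp
  obtain ⟨x, rfl⟩ : ∃ x, p = ((x, x + 2), (x + 1, x + 3)) := ⟨_, eq_of_mem_twoArcPairsOf hp⟩
  by_cases hw : (x - 1, x + 4) ∈ D.arcs
  · obtain ⟨y, rfl⟩ : ∃ y, x = y + 1 := ⟨x - 1, by have := one_le_fst hp₁; simp at this; omega⟩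
    have hN : nestedCrossingPair y ⊆ D.arcs := by
      simp only [nestedCrossingPair, Finset.insert_subset_iff, Finset.singleton_subset_iff]
      exact ⟨by simpa using hw, hp₁, hp₂⟩
    obtain ⟨q, hq⟩ := exists_expandMarked_eq gadget_nestedCrossingPair
      twoArcPairsOf_nestedCrossingPair (by omega : 2 * (s + 1) = 2 * (s - 1) + 4) hk hN
      (Or.inl (by simp [nestedCrossingPair])) hD
    exact ⟨.inr q, Subtype.ext hq⟩
  · have hN : crossingPair x ⊆ D.arcs := by
      simp only [crossingPair, Finset.insert_subset_iff, Finset.singleton_subset_iff]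
      exact ⟨hp₁, hp₂⟩
    obtain ⟨q, hq⟩ := exists_expandMarked_eq gadget_crossingPair twoArcPairsOf_crossingPair
      (by omega : 2 * (s + 1) = 2 * s + 2) hk hN (Or.inr (by simpa using hw)) hD
    exact ⟨.inl q, Subtype.ext hq⟩

lemma expandEitherMarked_bijective :
    Function.Bijective (expandEitherMarked (u₁ := u₁) (u₂ := u₂) hk hs) :=
  ⟨(expandMarked_injective _ _ _ _ fun _ _ h => by simpa using h).sumElim
      (expandMarked_injective _ _ _ _ fun _ _ h => by simpa using h)
      (expandMarked_crossingPair_ne_nestedCrossingPair hk _ _),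
    expandEitherMarked_surjective hk hs⟩

end Bijection

lemma icount3_recursion {k s u₁ u₂ : ℕ} (hk : 3 ≤ k) (hs : 1 ≤ s) :
    (u₂ + 1) * icount3 k (s + 1) u₁ (u₂ + 1) =
      (u₁ + 1) * icount3 k s (u₁ + 1) u₂ + (u₁ + 1) * icount3 k (s - 1) (u₁ + 1) u₂ := by
  have := finite_marked (fun D : Diagram (2 * s) => D.ShapeWith k (u₁ + 1) u₂) oneArcFinset
  have := finite_marked (fun D : Diagram (2 * (s - 1)) => D.ShapeWith k (u₁ + 1) u₂) oneArcFinset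
  have hcard :=
    Nat.card_eq_of_bijective _ (expandEitherMarked_bijective hk hs (u₁ := u₁) (u₂ := u₂))
  rw [Nat.card_sum] at hcard
  simp only [OneArcMarkedShape, PairMarkedShape] at hcard
  rw [card_marked_eq_mul _ _ fun D hD => hD.2.1, card_marked_eq_mul _ _ fun D hD => hD.2.1,
    card_marked_eq_mul (fun D : Diagram (2 * (s + 1)) => D.ShapeWith k u₁ (u₂ + 1))
      (fun D => twoArcPairsOf D.arcs) fun D hD => hD.2.2] at hcard
  exact hcard.symm

lemma icount3_eq_zero {k s u₁ u₂ : ℕ} (h : s < u₁ + 2 * u₂) : icount3 k s u₁ u₂ = 0 := by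
  refine Nat.card_eq_zero.2 (Or.inl ⟨fun ⟨D, _, h₁, h₂⟩ => ?_⟩)
  have := D.oneArcs_add_two_mul_twoArcCrossPairs_le
  have := D.two_mul_card_arcs_le
  omega

/-- For `k > 2`, the shape counts `i_k(s,u₁,u₂)` satisfy
`(u₂+1) i_k(s+1,u₁,u₂+1) = (u₁+1) i_k(s,u₁+1,u₂) + (u₁+1) i_k(s-1,u₁+1,u₂)`
for `s ≥ 1`, and `i_k(s,u₁,u₂) = 0` whenever `u₁ + 2u₂ > s`. -/
theorem shape_trivariate_recursion (k : ℕ) (hk : 2 < k) :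
    (∀ s u₁ u₂ : ℕ, 1 ≤ s →
      (u₂ + 1) * icount3 k (s + 1) u₁ (u₂ + 1) =
        (u₁ + 1) * icount3 k s (u₁ + 1) u₂ +
          (u₁ + 1) * icount3 k (s - 1) (u₁ + 1) u₂) ∧
    (∀ s u₁ u₂ : ℕ, s < u₁ + 2 * u₂ → icount3 k s u₁ u₂ = 0) :=
  ⟨fun _ _ _ hs => icount3_recursion hk hs, fun _ _ _ h => icount3_eq_zero h⟩
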